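/- For all β > 0 and γ > 0, the ratios D(2n,2m)/D(n,m) and D(2n,m)/D(n,m), as well as K(2n,2m)/K(n,m) and K(2n,m)/K(n,m), all converge to 1 as n, m → ∞, where D(n,m) and K(n,m) denote respectively the determinant and the condition number (largest eigenvalue divided by smallest eigenvalue) of the 3×3 Fisher information matrix corresponding to the grid design ξ_{n,m} = {(i/n, j/m) : i = 0,…,n, j = 0,…,m} on [0,1]². -/

import Mathlib

open Real Filter

/-- Entry `L1` of the Fisher information matrix for an equidistant design with
`n` points and step size `d`, covariance parameter `β`. -/
noncomputable def L1 (β : ℝ) (n : ℕ) (d : ℝ) : ℝ :=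
  (2 - (n : ℝ) + n * exp (β * d)) / (exp (β * d) + 1)

/-- Entry `L2` of the Fisher information matrix. -/
noncomputable def L2 (β : ℝ) (n : ℕ) (d : ℝ) : ℝ :=
  d * ((n : ℝ) - 1) / 2 * L1 β n d

/-- Entry `L3` of the Fisher information matrix. -/
noncomputable def L3 (β : ℝ) (n : ℕ) (d : ℝ) : ℝ :=
  d ^ 2 * ((n : ℝ) - 1) / (exp (2 * β * d) - 1) *
    ((n : ℝ) * (2 * n - 1) * (exp (β * d) - 1) ^ 2 / 6 + n * (exp (β * d) - 1) + 1)
/-- The 3×3 Fisher information matrix for the Ornstein–Uhlenbeck sheet model on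
a directionally equidistant grid with `n` points of step `d` (parameter `β`)
and `m` points of step `δ` (parameter `γ`); `Mi = Li` with `γ, m, δ`. -/
noncomputable def FIM (β γ : ℝ) (n m : ℕ) (d δ : ℝ) : Matrix (Fin 3) (Fin 3) ℝ :=
  !![L1 β n d * L1 γ m δ, L2 β n d * L1 γ m δ, L1 β n d * L2 γ m δ;
     L2 β n d * L1 γ m δ, L3 β n d * L1 γ m δ, L2 β n d * L2 γ m δ;
     L1 β n d * L2 γ m δ, L2 β n d * L2 γ m δ, L1 β n d * L3 γ m δ]

/-- The set of eigenvalues of a real 3×3 matrix (roots of the characteristic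
polynomial). -/
noncomputable def eigSet (A : Matrix (Fin 3) (Fin 3) ℝ) : Set ℝ :=
  {μ : ℝ | (A - μ • (1 : Matrix (Fin 3) (Fin 3) ℝ)).det = 0}

/-- The condition number of a real 3×3 matrix: largest eigenvalue divided by
smallest eigenvalue. -/
noncomputable def condNum (A : Matrix (Fin 3) (Fin 3) ℝ) : ℝ :=
  sSup (eigSet A) / sInf (eigSet A)

/-- Determinant of the Fisher information matrix for the grid design
`ξ_{n,m} = {(i/n, j/m)}` on `[0,1]²` (`n+1` by `m+1` points, steps `1/n`, `1/m`). -/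
noncomputable def Dnm (β γ : ℝ) (n m : ℕ) : ℝ :=
  (FIM β γ (n + 1) (m + 1) (1 / n) (1 / m)).det

/-- Condition number of the Fisher information matrix for the grid design
`ξ_{n,m}` on `[0,1]²`. -/
noncomputable def Knm (β γ : ℝ) (n m : ℕ) : ℝ :=
  condNum (FIM β γ (n + 1) (m + 1) (1 / n) (1 / m))

/-
The Fisher information matrix of the grid design is a principal `3 × 3` submatrix of the
Kronecker product of the two `2 × 2` matrices `!![L1, L2; L2, L3]` and `!![M1, M2; M2, M3]`.
Along the grid `ξ_{n,m}` each factor converges, via `n (exp (c / n) - 1) → c`, to a positive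
definite limit, hence so does the Fisher matrix. The determinant is continuous, and so are the
extreme eigenvalues of symmetric matrices: in the Loewner order `A ≤ λ_max(A) • 1`, and a
symmetric `E` satisfies `E ≤ (∑ |E_ij|) • 1`, so `λ_max` and `λ_min` move by at most the sum of
the absolute entry perturbations. Hence `D(n,m)` and `K(n,m)` have nonzero limits as `n, m → ∞`,
and the ratios with `(2n, 2m)` or `(2n, m)` in the numerator tend to `1`.
-/

open Matrix
open scoped MatrixOrder Kronecker Topology

lemma tendsto_natCast_mul_exp_div_sub_one (c : ℝ) :
    Tendsto (fun n : ℕ => n * (exp (c / n) - 1)) atTop (𝓝 c) := by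
  have hderiv : HasDerivAt (fun x : ℝ => exp (c * x)) c 0 := by
    simpa using ((hasDerivAt_id (0 : ℝ)).const_mul c).exp
  have hinv : Tendsto (fun n : ℕ => (n : ℝ)⁻¹) atTop (𝓝[≠] 0) :=
    tendsto_nhdsWithin_of_tendsto_nhds_of_eventually_within _ tendsto_inv_atTop_nhds_zero_nat
      ((eventually_ne_atTop 0).mono fun n hn => by simpa using hn)
  refine ((hasDerivAt_iff_tendsto_slope.1 hderiv).comp hinv).congr' ?_
  filter_upwards [eventually_ne_atTop 0] with n hn
  simp only [Function.comp_apply, slope_def_field, mul_zero, exp_zero, sub_zero, div_eq_mul_inv,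
    inv_inv]
  field_simp

lemma tendsto_exp_div_natCast (c : ℝ) : Tendsto (fun n : ℕ => exp (c / n)) atTop (𝓝 1) := by
  simpa [Function.comp_def] using
    (continuous_exp.tendsto 0).comp (tendsto_const_div_atTop_nhds_zero_nat c)

section GridLimits

variable (β : ℝ)

lemma tendsto_L1_grid : Tendsto (fun n : ℕ => L1 β (n + 1) (1 / n)) atTop (𝓝 ((2 + β) / 2)) := by
  have hnum := ((tendsto_natCast_mul_exp_div_sub_one β).add
    ((tendsto_exp_div_natCast β).sub_const 1)).const_add 2
  have hden := (tendsto_exp_div_natCast β).add_const 1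
  norm_num at hnum hden
  refine (hnum.div hden two_ne_zero).congr fun n => ?_
  simp only [Pi.div_apply, L1, mul_one_div]
  push_cast
  ring

lemma tendsto_L2_grid : Tendsto (fun n : ℕ => L2 β (n + 1) (1 / n)) atTop (𝓝 ((2 + β) / 4)) := by
  refine ((tendsto_L1_grid β).div_const 2).congr' ?_ |>.trans (by norm_num [div_div])
  filter_upwards [eventually_ne_atTop 0] with n hn
  simp only [one_div, L2, Nat.cast_add, Nat.cast_one, add_sub_cancel_right]
  field_simp

lemma tendsto_L3_grid (hβ : β ≠ 0) :
    Tendsto (fun n : ℕ => L3 β (n + 1) (1 / n)) atTop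
      (𝓝 ((β ^ 2 / 3 + β + 1) / (2 * β))) := by
  have hx := tendsto_natCast_mul_exp_div_sub_one β
  have he := (tendsto_exp_div_natCast β).sub_const 1
  have hy := (tendsto_natCast_mul_exp_div_sub_one (2 * β)).inv₀ (mul_ne_zero two_ne_zero hβ)
  have hlim := hy.mul ((((hx.add he).mul ((hx.const_mul 2).add he)).div_const 6).add
    (hx.add he) |>.add_const 1)
  norm_num at hlim
  convert hlim.congr' ?_ using 2
  · field_simp
    ring
  filter_upwards [eventually_ne_atTop 0] with n hn
  have hexp : exp (2 * β / n) - 1 ≠ 0 :=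
    sub_ne_zero.2 fun h => by simp_all [Real.exp_eq_one_iff]
  simp only [L3, mul_one_div]
  push_cast
  field_simp
  ring

end GridLimits

lemma Matrix.IsHermitian.kronecker {R m n : Type*} [CommSemiring R] [StarRing R]
    {A : Matrix m m R} {B : Matrix n n R} (hA : A.IsHermitian) (hB : B.IsHermitian) :
    (A ⊗ₖ B).IsHermitian := by
  rw [IsHermitian, conjTranspose_kronecker, hA.eq, hB.eq]

lemma Filter.Tendsto.kronecker {ι R l m n p : Type*} [TopologicalSpace R] [Mul R] [ContinuousMul R]
    {f : Filter ι} {A : ι → Matrix l m R} {B : ι → Matrix n p R} {A₀ : Matrix l m R}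
    {B₀ : Matrix n p R} (hA : Tendsto A f (𝓝 A₀)) (hB : Tendsto B f (𝓝 B₀)) :
    Tendsto (fun k => A k ⊗ₖ B k) f (𝓝 (A₀ ⊗ₖ B₀)) :=
  tendsto_pi_nhds.2 fun i => tendsto_pi_nhds.2 fun j =>
    ((hA.apply_nhds i.1).apply_nhds j.1).mul ((hB.apply_nhds i.2).apply_nhds j.2)

lemma Matrix.posDef_of_fin_two {a b c : ℝ} (ha : 0 < a) (hdet : b ^ 2 < a * c) :
    !![a, b; b, c].PosDef := by
  rw [posDef_iff_dotProduct_mulVec]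
  refine ⟨by ext i j; fin_cases i <;> fin_cases j <;> rfl, fun x hx => ?_⟩
  simp only [dotProduct, Pi.star_apply, star_trivial, mulVec, of_apply, cons_val',
    cons_val_fin_one, Fin.sum_univ_two, cons_val_zero, cons_val_one]
  by_cases h1 : x 1 = 0
  · have h0 : x 0 ≠ 0 := fun h0 => hx (funext fun i => by fin_cases i <;> assumption)
    simp only [h1, mul_zero, add_zero, zero_mul]
    nlinarith [mul_pos ha (sq_pos_of_ne_zero h0)]
  · have hsq : a * (x 0 * (a * x 0 + b * x 1) + x 1 * (b * x 0 + c * x 1)) =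
        (a * x 0 + b * x 1) ^ 2 + (a * c - b ^ 2) * x 1 ^ 2 := by ring
    refine pos_of_mul_pos_right (hsq ▸ ?_) ha.le
    nlinarith [sq_nonneg (a * x 0 + b * x 1), mul_pos (sub_pos.2 hdet) (sq_pos_of_ne_zero h1)]

section Spectrum

variable {n : Type*} [Fintype n]

lemma Matrix.dotProduct_mulVec_le_sum_abs_mul (E : Matrix n n ℝ) (x : n → ℝ) :
    x ⬝ᵥ E *ᵥ x ≤ (∑ i, ∑ j, |E i j|) * (x ⬝ᵥ x) := by
  have hsq : ∀ i, x i ^ 2 ≤ x ⬝ᵥ x := fun i => by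
    simpa [dotProduct, sq] using
      Finset.single_le_sum (fun k _ => mul_self_nonneg (x k)) (Finset.mem_univ i)
  have hprod : ∀ i j, |x i * x j| ≤ x ⬝ᵥ x := fun i j => by
    rw [abs_mul]
    nlinarith [two_mul_le_add_sq |x i| |x j|, sq_abs (x i), sq_abs (x j), hsq i, hsq j]
  calc x ⬝ᵥ E *ᵥ x = ∑ i, ∑ j, E i j * (x i * x j) := by
        simp only [dotProduct, mulVec, Finset.mul_sum]
        exact Finset.sum_congr rfl fun i _ => Finset.sum_congr rfl fun j _ => by ring
    _ ≤ ∑ i, ∑ j, |E i j| * (x ⬝ᵥ x) := Finset.sum_le_sum fun i _ => Finset.sum_le_sum fun j _ =>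
        calc E i j * (x i * x j) ≤ |E i j| * |x i * x j| := (le_abs_self _).trans (abs_mul _ _).le
          _ ≤ |E i j| * (x ⬝ᵥ x) := by gcongr; exact hprod i j
    _ = (∑ i, ∑ j, |E i j|) * (x ⬝ᵥ x) := by simp only [Finset.sum_mul]

variable [DecidableEq n]

lemma Matrix.IsHermitian.le_algebraMap_sum_abs {E : Matrix n n ℝ} (hE : E.IsHermitian) :
    E ≤ algebraMap ℝ _ (∑ i, ∑ j, |E i j|) := by
  rw [Matrix.le_iff, Algebra.algebraMap_eq_smul_one]
  refine .of_dotProduct_mulVec_nonneg ((isHermitian_one.smul (.all _)).sub hE) fun x => ?_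
  simp only [sub_mulVec, smul_mulVec, one_mulVec,
    dotProduct_sub, dotProduct_smul, star_trivial, smul_eq_mul, sub_nonneg]
  linarith [E.dotProduct_mulVec_le_sum_abs_mul x]

variable [Nonempty n]

lemma Matrix.IsHermitian.spectrum_nonempty {A : Matrix n n ℝ} (hA : A.IsHermitian) :
    (spectrum ℝ A).Nonempty :=
  hA.spectrum_real_eq_range_eigenvalues ▸ Set.range_nonempty _

lemma Matrix.IsHermitian.sSup_spectrum_le_iff {A : Matrix n n ℝ} (hA : A.IsHermitian) {c : ℝ} :
    sSup (spectrum ℝ A) ≤ c ↔ A ≤ algebraMap ℝ _ c := by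
  rw [le_algebraMap_iff_spectrum_le hA.isSelfAdjoint]
  exact csSup_le_iff finite_real_spectrum.bddAbove hA.spectrum_nonempty

lemma Matrix.IsHermitian.sSup_spectrum_le_add {A B : Matrix n n ℝ} (hA : A.IsHermitian)
    (hB : B.IsHermitian) :
    sSup (spectrum ℝ B) ≤ sSup (spectrum ℝ A) + ∑ i, ∑ j, |B i j - A i j| := by
  rw [hB.sSup_spectrum_le_iff, map_add]
  calc B = A + (B - A) := by abel
    _ ≤ _ := add_le_add (hA.sSup_spectrum_le_iff.1 le_rfl) (hB.sub hA).le_algebraMap_sum_abs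

variable {ι : Type*} {l : Filter ι} {F : ι → Matrix n n ℝ} {M : Matrix n n ℝ}

lemma tendsto_sSup_spectrum (hF : ∀ k, (F k).IsHermitian) (hM : M.IsHermitian)
    (h : Tendsto F l (𝓝 M)) :
    Tendsto (fun k => sSup (spectrum ℝ (F k))) l (𝓝 (sSup (spectrum ℝ M))) := by
  have hdist : Tendsto (fun k => ∑ i, ∑ j, |F k i j - M i j|) l (𝓝 0) := by
    have hcont : Continuous fun A : Matrix n n ℝ => ∑ i, ∑ j, |A i j - M i j| := by fun_prop
    simpa [Function.comp_def] using (hcont.tendsto M).comp h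
  refine tendsto_iff_norm_sub_tendsto_zero.2 <|
    squeeze_zero (fun _ => norm_nonneg _) (fun k => ?_) hdist
  have hle := (hF k).sSup_spectrum_le_add hM
  simp only [abs_sub_comm (M _ _)] at hle
  rw [Real.norm_eq_abs, abs_sub_le_iff]
  exact ⟨by linarith [hM.sSup_spectrum_le_add (hF k)], by linarith⟩

lemma tendsto_sInf_spectrum (hF : ∀ k, (F k).IsHermitian) (hM : M.IsHermitian)
    (h : Tendsto F l (𝓝 M)) :
    Tendsto (fun k => sInf (spectrum ℝ (F k))) l (𝓝 (sInf (spectrum ℝ M))) := by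
  have hneg (A : Matrix n n ℝ) : sInf (spectrum ℝ A) = -sSup (spectrum ℝ (-A)) := by
    rw [← spectrum.neg_eq, Real.sSup_neg, neg_neg]
  simp only [hneg]
  exact (tendsto_sSup_spectrum (fun k => (hF k).neg) hM.neg h.neg).neg

lemma Matrix.PosDef.sInf_spectrum_pos {A : Matrix n n ℝ} (hA : A.PosDef) :
    0 < sInf (spectrum ℝ A) := by
  obtain ⟨i, hi⟩ := exists_eq_ciInf_of_finite (f := hA.isHermitian.eigenvalues)
  rw [hA.isHermitian.spectrum_real_eq_range_eigenvalues, ← iInf, ← hi]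
  exact hA.eigenvalues_pos i

end Spectrum

lemma eigSet_eq_spectrum (A : Matrix (Fin 3) (Fin 3) ℝ) : eigSet A = spectrum ℝ A := by
  ext μ
  rw [eigSet, Set.mem_ofPred_eq, spectrum.mem_iff, isUnit_iff_isUnit_det, isUnit_iff_ne_zero,
    not_not, Algebra.algebraMap_eq_smul_one, ← neg_sub, det_neg]
  simp

lemma condNum_pos {A : Matrix (Fin 3) (Fin 3) ℝ} (hA : A.PosDef) : 0 < condNum A := by
  have hinf := hA.sInf_spectrum_pos
  have hsup : sInf (spectrum ℝ A) ≤ sSup (spectrum ℝ A) :=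
    csInf_le_csSup hA.isHermitian.spectrum_nonempty finite_real_spectrum.bddBelow
      finite_real_spectrum.bddAbove
  rw [condNum, eigSet_eq_spectrum]
  exact div_pos (hinf.trans_le hsup) hinf

lemma tendsto_condNum {ι : Type*} {l : Filter ι} {F : ι → Matrix (Fin 3) (Fin 3) ℝ}
    {M : Matrix (Fin 3) (Fin 3) ℝ} (hF : ∀ k, (F k).IsHermitian) (hM : M.PosDef)
    (h : Tendsto F l (𝓝 M)) : Tendsto (fun k => condNum (F k)) l (𝓝 (condNum M)) := by
  simp only [condNum, eigSet_eq_spectrum]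
  exact (tendsto_sSup_spectrum hF hM.isHermitian h).div (tendsto_sInf_spectrum hF hM.isHermitian h)
    hM.sInf_spectrum_pos.ne'

noncomputable def ouFisher (β : ℝ) (n : ℕ) (d : ℝ) : Matrix (Fin 2) (Fin 2) ℝ :=
  !![L1 β n d, L2 β n d; L2 β n d, L3 β n d]

noncomputable def ouFisherLimit (β : ℝ) : Matrix (Fin 2) (Fin 2) ℝ :=
  !![(2 + β) / 2, (2 + β) / 4; (2 + β) / 4, (β ^ 2 / 3 + β + 1) / (2 * β)]

lemma isHermitian_ouFisher (β : ℝ) (n : ℕ) (d : ℝ) : (ouFisher β n d).IsHermitian := by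
  ext i j; fin_cases i <;> fin_cases j <;> rfl

lemma tendsto_ouFisher {β : ℝ} (hβ : β ≠ 0) :
    Tendsto (fun n : ℕ => ouFisher β (n + 1) (1 / n)) atTop (𝓝 (ouFisherLimit β)) := by
  refine tendsto_pi_nhds.2 fun i => tendsto_pi_nhds.2 fun j => ?_
  fin_cases i <;> fin_cases j
  exacts [tendsto_L1_grid β, tendsto_L2_grid β, tendsto_L2_grid β, tendsto_L3_grid β hβ]

lemma posDef_ouFisherLimit {β : ℝ} (hβ : 0 < β) : (ouFisherLimit β).PosDef := by
  refine posDef_of_fin_two (by positivity) ?_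
  rw [div_pow, mul_div_assoc', div_lt_div_iff₀ (by norm_num) (by positivity)]
  nlinarith

/-- The parameters `α₀, α₁, α₂` of the trend `α₀ + α₁ s + α₂ t` sit at the positions
`(0,0), (1,0), (0,1)` of the product basis `{1, s} ⊗ {1, t}`. -/
def gridIndex : Fin 3 → Fin 2 × Fin 2 := ![(0, 0), (1, 0), (0, 1)]

lemma FIM_eq_submatrix_kronecker (β γ : ℝ) (n m : ℕ) (d δ : ℝ) :
    FIM β γ n m d δ = (ouFisher β n d ⊗ₖ ouFisher γ m δ).submatrix gridIndex gridIndex := by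
  ext i j; fin_cases i <;> fin_cases j <;> rfl

noncomputable def fimLimit (β γ : ℝ) : Matrix (Fin 3) (Fin 3) ℝ :=
  (ouFisherLimit β ⊗ₖ ouFisherLimit γ).submatrix gridIndex gridIndex

lemma posDef_fimLimit {β γ : ℝ} (hβ : 0 < β) (hγ : 0 < γ) : (fimLimit β γ).PosDef :=
  ((posDef_ouFisherLimit hβ).kronecker (posDef_ouFisherLimit hγ)).submatrix (by decide)

lemma isHermitian_FIM (β γ : ℝ) (n m : ℕ) (d δ : ℝ) : (FIM β γ n m d δ).IsHermitian := by
  rw [FIM_eq_submatrix_kronecker]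
  exact ((isHermitian_ouFisher β n d).kronecker (isHermitian_ouFisher γ m δ)).submatrix _

lemma tendsto_FIM_grid {β γ : ℝ} (hβ : β ≠ 0) (hγ : γ ≠ 0) :
    Tendsto (fun nm : ℕ × ℕ => FIM β γ (nm.1 + 1) (nm.2 + 1) (1 / nm.1) (1 / nm.2)) atTop
      (𝓝 (fimLimit β γ)) := by
  simp only [FIM_eq_submatrix_kronecker]
  rw [← prod_atTop_atTop_eq]
  exact ((continuous_id.matrix_submatrix _ _).tendsto _).comp
    (((tendsto_ouFisher hβ).comp tendsto_fst).kronecker ((tendsto_ouFisher hγ).comp tendsto_snd))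

lemma Filter.Tendsto.div_comp_self {α K : Type*} [DivisionRing K] [TopologicalSpace K]
    [ContinuousMul K] [ContinuousInv₀ K] {l : Filter α} {f : α → K} {c : K}
    (hf : Tendsto f l (𝓝 c)) (hc : c ≠ 0) {φ : α → α} (hφ : Tendsto φ l l) :
    Tendsto (fun x => f (φ x) / f x) l (𝓝 1) := by
  have h := (hf.comp hφ).div hf hc
  rwa [div_self hc] at h

/-- Refining the grid on a fixed design space has asymptotically no effect:
all four ratios tend to `1` as `n, m → ∞`. -/
theorem grid_double_ratio_tendsto_one (β γ : ℝ) (hβ : 0 < β) (hγ : 0 < γ) :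
    Tendsto (fun nm : ℕ × ℕ => Dnm β γ (2 * nm.1) (2 * nm.2) / Dnm β γ nm.1 nm.2)
      atTop (nhds 1) ∧
    Tendsto (fun nm : ℕ × ℕ => Dnm β γ (2 * nm.1) nm.2 / Dnm β γ nm.1 nm.2)
      atTop (nhds 1) ∧
    Tendsto (fun nm : ℕ × ℕ => Knm β γ (2 * nm.1) (2 * nm.2) / Knm β γ nm.1 nm.2)
      atTop (nhds 1) ∧
    Tendsto (fun nm : ℕ × ℕ => Knm β γ (2 * nm.1) nm.2 / Knm β γ nm.1 nm.2)
      atTop (nhds 1) := by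
  have hM := posDef_fimLimit hβ hγ
  have hFIM := tendsto_FIM_grid hβ.ne' hγ.ne'
  have hD : Tendsto (fun nm : ℕ × ℕ => Dnm β γ nm.1 nm.2) atTop (𝓝 (fimLimit β γ).det) :=
    (continuous_id.matrix_det.tendsto _).comp hFIM
  have hK : Tendsto (fun nm : ℕ × ℕ => Knm β γ nm.1 nm.2) atTop (𝓝 (condNum (fimLimit β γ))) :=
    tendsto_condNum (fun _ => isHermitian_FIM ..) hM hFIM
  have hboth : Tendsto (fun nm : ℕ × ℕ => (2 * nm.1, 2 * nm.2)) atTop atTop :=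
    tendsto_atTop_atTop_of_monotone
      (fun _ _ h => ⟨Nat.mul_le_mul_left 2 h.1, Nat.mul_le_mul_left 2 h.2⟩)
      fun b => ⟨b, by omega, by omega⟩
  have hfirst : Tendsto (fun nm : ℕ × ℕ => (2 * nm.1, nm.2)) atTop atTop :=
    tendsto_atTop_atTop_of_monotone (fun _ _ h => ⟨Nat.mul_le_mul_left 2 h.1, h.2⟩)
      fun b => ⟨b, by omega, le_rfl⟩
  exact ⟨(hD.div_comp_self hM.det_pos.ne' hboth :), (hD.div_comp_self hM.det_pos.ne' hfirst :),
    (hK.div_comp_self (condNum_pos hM).ne' hboth :),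
    (hK.div_comp_self (condNum_pos hM).ne' hfirst :)⟩
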